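/- Let g ≥ 1 and t = (t₁,…,t_g) ∈ ℝ^g. Then t ∈ [−2,2]^g if and only if for every i with 1 ≤ i ≤ g both L_i⁺ ≥ 0 and L_i⁻ ≥ 0, where L_i⁺ = Σ_{k=0}^{i} C(g − i + k, k) · e_{i−k}(t) · 2^k and L_i⁻ = Σ_{k=0}^{i} C(g − i + k, k) · (−1)^{i−k} · e_{i−k}(t) · 2^k, with C(·,·) the binomial coefficient and e₀ = 1. -/
import Mathlib


/-- The elementary symmetric polynomial of degree `k` in `g` variables,
`e_k(t) = Σ_{i₁<⋯<i_k} t_{i₁}⋯t_{i_k}` (with `e₀ = 1`). -/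
def esymm (g k : ℕ) (t : Fin g → ℝ) : ℝ :=
  ∑ s ∈ Finset.univ.powersetCard k, ∏ j ∈ s, t j

/-- The linear form `L_i⁺ = Σ_{k=0}^{i} C(g−i+k,k) e_{i−k}(t) 2ᵏ`. -/
def Lplus (g i : ℕ) (t : Fin g → ℝ) : ℝ :=
  ∑ k ∈ Finset.range (i + 1), ((g - i + k).choose k : ℝ) * esymm g (i - k) t * 2 ^ k

/-- The linear form `L_i⁻ = Σ_{k=0}^{i} C(g−i+k,k) (−1)^{i−k} e_{i−k}(t) 2ᵏ`. -/
def Lminus (g i : ℕ) (t : Fin g → ℝ) : ℝ :=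
  ∑ k ∈ Finset.range (i + 1),
    ((g - i + k).choose k : ℝ) * (-1 : ℝ) ^ (i - k) * esymm g (i - k) t * 2 ^ k

open Polynomial Finset

lemma esymm_eq_coeff (g k : ℕ) (t : Fin g → ℝ) (hk : k ≤ g) :
    (∏ j, (X + C (t j))).coeff (g - k) = esymm g k t := by
  have h : g - k ≤ #(Finset.univ : Finset (Fin g)) := by simp [Nat.sub_le]
  rw [Finset.prod_X_add_C_coeff _ t h, esymm]
  have hc : #(Finset.univ : Finset (Fin g)) - (g - k) = k := by
    simp only [Finset.card_univ, Fintype.card_fin]; omega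
  rw [hc]

lemma natDegree_prodP (g : ℕ) (t : Fin g → ℝ) :
    (∏ j, (X + C (t j))).natDegree = g := by
  rw [Polynomial.natDegree_prod]
  · simp
  · intro j _; exact X_add_C_ne_zero _

lemma esymm_neg (g m : ℕ) (t : Fin g → ℝ) :
    esymm g m (fun j => -t j) = (-1 : ℝ) ^ m * esymm g m t := by
  unfold esymm
  rw [Finset.mul_sum]
  refine Finset.sum_congr rfl fun s hs => ?_
  have hcard : s.card = m := (Finset.mem_powersetCard.mp hs).2
  rw [← hcard]
  calc ∏ x ∈ s, -t x = ∏ x ∈ s, (-1 : ℝ) * t x := by simp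
    _ = (∏ _x ∈ s, (-1 : ℝ)) * ∏ j ∈ s, t j := Finset.prod_mul_distrib
    _ = (-1 : ℝ) ^ #s * ∏ j ∈ s, t j := by rw [Finset.prod_const]

lemma Lplus_eq_esymm (g i : ℕ) (t : Fin g → ℝ) (h1 : i ≤ g) :
    Lplus g i t = esymm g i (fun j => t j + 2) := by
  have key : (∏ j, (X + C (t j + 2))) = Polynomial.taylor 2 (∏ j, (X + C (t j))) := by
    rw [← Polynomial.taylorAlgHom_apply, map_prod]
    simp [Polynomial.taylorAlgHom_apply, add_comm, add_assoc, add_left_comm]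
  have hco := esymm_eq_coeff g i (fun j => t j + 2) h1
  rw [key, Polynomial.taylor_coeff] at hco
  have hdeg : (Polynomial.hasseDeriv (g - i) (∏ j, (X + C (t j)))).natDegree < i + 1 := by
    have := Polynomial.natDegree_hasseDeriv (∏ j, (X + Polynomial.C (t j))) (g - i)
    rw [natDegree_prodP] at this
    omega
  rw [Polynomial.eval_eq_sum_range' hdeg] at hco
  rw [← hco, Lplus]
  refine Finset.sum_congr rfl fun k hk => ?_
  have hki : k ≤ i := by simpa [Nat.lt_succ_iff] using hk
  have h2 : k + (g - i) = g - (i - k) := by omega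
  have h3 : (k + (g - i)).choose (g - i) = (g - i + k).choose k := by
    rw [add_comm k (g - i), Nat.choose_symm_add]
  rw [Polynomial.hasseDeriv_coeff, h3, h2, esymm_eq_coeff g (i - k) t (by omega)]

lemma Lminus_eq_esymm (g i : ℕ) (t : Fin g → ℝ) (h1 : i ≤ g) :
    Lminus g i t = esymm g i (fun j => -t j + 2) := by
  rw [← Lplus_eq_esymm g i (fun j => -t j) h1, Lminus, Lplus]
  refine Finset.sum_congr rfl fun k _ => ?_
  rw [esymm_neg]
  ring

lemma esymm_nonneg {g k : ℕ} {u : Fin g → ℝ} (hu : ∀ j, 0 ≤ u j) : 0 ≤ esymm g k u :=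
  Finset.sum_nonneg fun s _ => Finset.prod_nonneg fun j _ => hu j

lemma prod_add_expand (g : ℕ) (u : Fin g → ℝ) (x : ℝ) :
    ∏ j, (u j + x) = ∑ i ∈ Finset.range (g + 1), esymm g i u * x ^ (g - i) := by
  have hcu : #(Finset.univ : Finset (Fin g)) = g := by simp
  rw [Finset.prod_add, Finset.sum_powerset, hcu]
  refine Finset.sum_congr rfl fun i hi => ?_
  rw [esymm, Finset.sum_mul]
  refine Finset.sum_congr rfl fun s hs => ?_
  have h1 : #s = i := (Finset.mem_powersetCard.mp hs).2
  rw [Finset.prod_const]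
  congr 1
  rw [Finset.card_sdiff_of_subset (Finset.subset_univ s), hcu, h1]

lemma esymm_zero' (g : ℕ) (u : Fin g → ℝ) : esymm g 0 u = 1 := by
  simp [esymm]

lemma nonneg_of_esymm (g : ℕ) (u : Fin g → ℝ)
    (h : ∀ i, 1 ≤ i → i ≤ g → 0 ≤ esymm g i u) : ∀ j, 0 ≤ u j := by
  intro j
  by_contra hj
  push_neg at hj
  have hx0 : 0 < -u j := by linarith
  have hzero : ∏ l, (u l + -u j) = 0 :=
    Finset.prod_eq_zero (Finset.mem_univ j) (by ring)
  rw [prod_add_expand] at hzero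
  have hpos : 0 < ∑ i ∈ Finset.range (g + 1), esymm g i u * (-u j) ^ (g - i) := by
    apply Finset.sum_pos'
    · intro i hi
      rcases Nat.eq_zero_or_pos i with h0 | h1
      · subst h0
        rw [esymm_zero', one_mul]
        positivity
      · exact mul_nonneg (h i h1 (by simpa [Nat.lt_succ_iff] using hi)) (by positivity)
    · refine ⟨0, Finset.mem_range.mpr (Nat.succ_pos g), ?_⟩
      rw [esymm_zero', one_mul]
      simpa using pow_pos hx0 g
  linarith

/-- `t ∈ [−2,2]^g` iff `L_i⁺ ≥ 0` and `L_i⁻ ≥ 0` for all `1 ≤ i ≤ g`. -/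
theorem mem_box_iff_L_nonneg (g : ℕ) (hg : 1 ≤ g) (t : Fin g → ℝ) :
    (∀ j : Fin g, t j ∈ Set.Icc (-2 : ℝ) 2)
      ↔ ∀ i : ℕ, 1 ≤ i → i ≤ g → 0 ≤ Lplus g i t ∧ 0 ≤ Lminus g i t := by
  constructor
  · intro h i _ hi
    rw [Lplus_eq_esymm g i t hi, Lminus_eq_esymm g i t hi]
    refine ⟨esymm_nonneg fun j => ?_, esymm_nonneg fun j => ?_⟩ <;>
      · have := h j
        rw [Set.mem_Icc] at this
        linarith [this.1, this.2]
  · intro h j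
    have hp : ∀ i, 1 ≤ i → i ≤ g → 0 ≤ esymm g i (fun j => t j + 2) := fun i h1 h2 =>
      (Lplus_eq_esymm g i t h2) ▸ (h i h1 h2).1
    have hm : ∀ i, 1 ≤ i → i ≤ g → 0 ≤ esymm g i (fun j => -t j + 2) := fun i h1 h2 =>
      (Lminus_eq_esymm g i t h2) ▸ (h i h1 h2).2
    have h1 := nonneg_of_esymm g _ hp j
    have h2 := nonneg_of_esymm g _ hm j
    simp only [Set.mem_Icc]
    constructor <;> linarith
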